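/- arXiv:1210.0570 — 2 statements merged into one kernel-verified Lean document; each statement's English description precedes it below -/
import Mathlib

section
/- Let r be a real number, B > 0, T > 0, and σ : ℝ → ℝ continuous with w(t) = ∫_t^T σ(s)² ds > 0 for all t ∈ (0,T). Define x₁(v,t) = (log(v/B) + r(T−t) + w(t)/2)/√(w(t)), x₂(v,t) = x₁(v,t) − √(w(t)), d(v,t) = B e^{−r(T−t)}/v, and F(v,t) = B e^{−r(T−t)} [Φ(x₂(v,t)) + (1/d(v,t)) Φ(−x₁(v,t))]. Then F satisfies (1/2)σ(t)² v² F_vv(v,t) + r v F_v(v,t) + F_t(v,t) − r F(v,t) = 0 for all (v,t) ∈ (0,∞) × (0,T). -/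
open Real Set Filter

noncomputable def Phi (x : ℝ) : ℝ :=
  (Real.sqrt (2 * Real.pi))⁻¹ * ∫ y in Set.Iic x, Real.exp (-(y ^ 2) / 2)

noncomputable def phiD (x : ℝ) : ℝ := (Real.sqrt (2 * Real.pi))⁻¹ * Real.exp (-(x ^ 2) / 2)

lemma phiD_neg (x : ℝ) : phiD (-x) = phiD x := by simp [phiD]

lemma gauss_integrable : MeasureTheory.Integrable (fun y : ℝ => Real.exp (-(y ^ 2) / 2)) := by
  have h : (fun y : ℝ => Real.exp (-(y ^ 2) / 2)) = fun y : ℝ => Real.exp (-(1/2 : ℝ) * y ^ 2) := by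
    funext y; ring_nf
  rw [h]; exact integrable_exp_neg_mul_sq (by norm_num)

lemma hasDerivAt_Phi (x : ℝ) : HasDerivAt Phi (phiD x) x := by
  have hint := gauss_integrable
  have hcont : Continuous fun y : ℝ => Real.exp (-(y ^ 2) / 2) := by continuity
  have h0 : Phi = fun u => (Real.sqrt (2 * Real.pi))⁻¹ *
      ((∫ y in Set.Iic (0:ℝ), Real.exp (-(y ^ 2) / 2)) + ∫ y in (0:ℝ)..u, Real.exp (-(y ^ 2) / 2)) := by
    funext u
    rw [Phi, ← intervalIntegral.integral_Iic_sub_Iic hint.integrableOn hint.integrableOn]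
    ring
  have hFTC : HasDerivAt (fun u => ∫ y in (0:ℝ)..u, Real.exp (-(y ^ 2) / 2))
      (Real.exp (-(x ^ 2) / 2)) x :=
    intervalIntegral.integral_hasDerivAt_right hint.intervalIntegrable
      (hcont.stronglyMeasurableAtFilter _ _) hcont.continuousAt
  rw [h0]
  exact (hFTC.const_add _).const_mul _

/-- The risky-debt value
`F(v,t) = B e^{-r(T-t)} [Φ(x₂) + (1/d) Φ(-x₁)]` satisfies the backward parabolic RPDE. -/
theorem debt_formula_satisfies_rpde
    (r B T : ℝ) (hB : 0 < B) (hT : 0 < T)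
    (σ : ℝ → ℝ) (hσ : Continuous σ)
    (w : ℝ → ℝ) (hw : ∀ t, w t = ∫ s in t..T, (σ s) ^ 2)
    (hwpos : ∀ t ∈ Set.Ioo (0 : ℝ) T, 0 < w t)
    (x₁ x₂ d : ℝ → ℝ → ℝ)
    (hx₁ : ∀ v t, x₁ v t =
      (Real.log (v / B) + r * (T - t) + w t / 2) / Real.sqrt (w t))
    (hx₂ : ∀ v t, x₂ v t = x₁ v t - Real.sqrt (w t))
    (hd : ∀ v t, d v t = B * Real.exp (-r * (T - t)) / v)
    (F : ℝ → ℝ → ℝ)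
    (hF : ∀ v t, F v t = B * Real.exp (-r * (T - t)) *
      (Phi (x₂ v t) + (1 / d v t) * Phi (-(x₁ v t)))) :
    ∀ v ∈ Set.Ioi (0 : ℝ), ∀ t ∈ Set.Ioo (0 : ℝ) T,
        (1 / 2) * (σ t) ^ 2 * v ^ 2 *
            deriv (fun v' => deriv (fun v'' => F v'' t) v') v
          + r * v * deriv (fun v' => F v' t) v
          + deriv (fun t' => F v t') t
          - r * F v t = 0 := by
  intro v hv t ht
  have hv0 : (0:ℝ) < v := hv
  have hwt : 0 < w t := hwpos t ht
  have hs : 0 < Real.sqrt (w t) := Real.sqrt_pos.mpr hwt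
  -- global rewriting of F
  have hF' : ∀ v' t', F v' t' = B * Real.exp (-r * (T - t')) * Phi (x₂ v' t')
      + v' * Phi (-(x₁ v' t')) := by
    intro v' t'
    have hK' : B * Real.exp (-r * (T - t')) ≠ 0 := by positivity
    rw [hF, hd, one_div_div]
    field_simp
  -- key identity
  have hkey : ∀ v' ∈ Set.Ioi (0:ℝ),
      B * Real.exp (-r * (T - t)) * phiD (x₂ v' t) = v' * phiD (x₁ v' t) := by
    intro v' hv'
    have hv'0 : (0:ℝ) < v' := hv'
    have hsa : Real.sqrt (w t) * x₁ v' t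
        = Real.log v' - Real.log B + r * (T - t) + w t / 2 := by
      rw [hx₁, Real.log_div (ne_of_gt hv'0) (ne_of_gt hB)]
      field_simp
    have hs2 : Real.sqrt (w t) ^ 2 = w t := Real.sq_sqrt hwt.le
    have hexp : B * Real.exp (-r * (T - t))
          * Real.exp (-((x₁ v' t - Real.sqrt (w t)) ^ 2) / 2)
        = v' * Real.exp (-((x₁ v' t) ^ 2) / 2) := by
      calc B * Real.exp (-r * (T - t)) * Real.exp (-((x₁ v' t - Real.sqrt (w t)) ^ 2) / 2)
          = Real.exp (Real.log B + -r * (T - t) + -((x₁ v' t - Real.sqrt (w t)) ^ 2) / 2) := by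
            rw [Real.exp_add, Real.exp_add, Real.exp_log hB]
        _ = Real.exp (Real.log v' + -((x₁ v' t) ^ 2) / 2) := by
            congr 1
            linear_combination hsa - hs2 / 2
        _ = v' * Real.exp (-((x₁ v' t) ^ 2) / 2) := by
            rw [Real.exp_add, Real.exp_log hv'0]
    rw [hx₂, phiD, phiD]
    linear_combination (Real.sqrt (2 * Real.pi))⁻¹ * hexp
  -- spatial derivative of x₁
  have hx1v : ∀ v' ∈ Set.Ioi (0:ℝ),
      HasDerivAt (fun v'' => x₁ v'' t) (1 / (v' * Real.sqrt (w t))) v' := by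
    intro v' hv'
    have hv'0 : (0:ℝ) < v' := hv'
    have h1 : HasDerivAt
        (fun v'' => (Real.log v'' + (-Real.log B + r * (T - t) + w t / 2)) / Real.sqrt (w t))
        (v'⁻¹ / Real.sqrt (w t)) v' :=
      ((Real.hasDerivAt_log (ne_of_gt hv'0)).add_const _).div_const _
    have h2 : (fun v'' => x₁ v'' t) =ᶠ[nhds v'] fun v'' =>
        (Real.log v'' + (-Real.log B + r * (T - t) + w t / 2)) / Real.sqrt (w t) := by
      filter_upwards [Ioi_mem_nhds hv'] with u hu
      rw [hx₁, Real.log_div (ne_of_gt hu) (ne_of_gt hB)]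
      ring
    have h3 := h1.congr_of_eventuallyEq h2
    rwa [inv_eq_one_div, div_div] at h3
  -- first spatial derivative of F
  have hFv : ∀ v' ∈ Set.Ioi (0:ℝ),
      HasDerivAt (fun v'' => F v'' t) (Phi (-(x₁ v' t))) v' := by
    intro v' hv'
    have hv'0 : (0:ℝ) < v' := hv'
    have hx2v : HasDerivAt (fun v'' => x₂ v'' t) (1 / (v' * Real.sqrt (w t))) v' := by
      have h := (hx1v v' hv').sub_const (Real.sqrt (w t))
      exact h.congr_of_eventuallyEq (Filter.Eventually.of_forall fun u => hx₂ u t)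
    have hterm1 : HasDerivAt (fun v'' => B * Real.exp (-r * (T - t)) * Phi (x₂ v'' t))
        (B * Real.exp (-r * (T - t)) * (phiD (x₂ v' t) * (1 / (v' * Real.sqrt (w t))))) v' :=
      ((hasDerivAt_Phi (x₂ v' t)).comp v' hx2v).const_mul _
    have hterm2 : HasDerivAt (fun v'' => v'' * Phi (-(x₁ v'' t)))
        (1 * Phi (-(x₁ v' t)) + v' * (phiD (-(x₁ v' t)) * -(1 / (v' * Real.sqrt (w t))))) v' :=
      (hasDerivAt_id v').mul ((hasDerivAt_Phi (-(x₁ v' t))).comp (h₂ := Phi) (h := fun v'' => -(x₁ v'' t)) v' (hx1v v' hv').neg)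
    have hsum := hterm1.add hterm2
    have hfun : (fun v'' => F v'' t) = fun v'' =>
        B * Real.exp (-r * (T - t)) * Phi (x₂ v'' t) + v'' * Phi (-(x₁ v'' t)) :=
      funext fun u => hF' u t
    rw [hfun]
    refine hsum.congr_deriv (Eq.symm ?_)
    rw [phiD_neg]
    linear_combination (-(1 / (v' * Real.sqrt (w t)))) * hkey v' hv'
  -- second spatial derivative
  have hFvv : HasDerivAt (fun v' => deriv (fun v'' => F v'' t) v')
      (phiD (-(x₁ v t)) * -(1 / (v * Real.sqrt (w t)))) v := by
    have h1 : HasDerivAt (fun v' => Phi (-(x₁ v' t)))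
        (phiD (-(x₁ v t)) * -(1 / (v * Real.sqrt (w t)))) v :=
      (hasDerivAt_Phi (-(x₁ v t))).comp (h₂ := Phi) (h := fun v'' => -(x₁ v'' t)) v (hx1v v hv).neg
    refine h1.congr_of_eventuallyEq ?_
    filter_upwards [Ioi_mem_nhds hv] with u hu
    exact (hFv u hu).deriv
  -- time derivative of w
  have hw' : HasDerivAt w (-(σ t ^ 2)) t := by
    have hg : HasDerivAt (fun u => ∫ x in T..u, σ x ^ 2) (σ t ^ 2) t :=
      intervalIntegral.integral_hasDerivAt_right ((hσ.pow 2).intervalIntegrable T t)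
        ((hσ.pow 2).stronglyMeasurableAtFilter _ _) (hσ.pow 2).continuousAt
    have hwe : w = fun u => -∫ x in T..u, σ x ^ 2 := funext fun u => by
      rw [hw u, intervalIntegral.integral_symm]
    rw [hwe]; exact hg.neg
  have hsqrt' : HasDerivAt (fun t' => Real.sqrt (w t'))
      (-(σ t ^ 2) / (2 * Real.sqrt (w t))) t := hw'.sqrt (ne_of_gt hwt)
  -- time derivative of x₁, x₂
  have hnum : HasDerivAt (fun t' => Real.log (v / B) + r * (T - t') + w t' / 2)
      (r * -1 + -(σ t ^ 2) / 2) t :=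
    ((((hasDerivAt_id t).const_sub T).const_mul r).const_add (Real.log (v / B))).add
      (hw'.div_const 2)
  obtain ⟨a, hx1t⟩ : ∃ a, HasDerivAt (fun t' => x₁ v t') a t :=
    ⟨_, (hnum.div hsqrt' (ne_of_gt hs)).congr_of_eventuallyEq
      (Filter.Eventually.of_forall fun u => hx₁ v u)⟩
  have hx2t : HasDerivAt (fun t' => x₂ v t')
      (a - -(σ t ^ 2) / (2 * Real.sqrt (w t))) t :=
    (hx1t.sub hsqrt').congr_of_eventuallyEq (Filter.Eventually.of_forall fun u => hx₂ v u)
  have hKt : HasDerivAt (fun t' => B * Real.exp (-r * (T - t')))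
      (Real.exp (-r * (T - t)) * (-r * -1) * B) t := by
    have h1 : HasDerivAt (fun t' => -r * (T - t')) (-r * -1) t :=
      ((hasDerivAt_id t).const_sub T).const_mul (-r)
    have h2 := h1.exp.mul_const B
    refine h2.congr_of_eventuallyEq (Filter.Eventually.of_forall fun u => by ring)
  have hFt : HasDerivAt (fun t' => F v t')
      (Real.exp (-r * (T - t)) * (-r * -1) * B * Phi (x₂ v t)
       + B * Real.exp (-r * (T - t)) *
          (phiD (x₂ v t) * (a - -(σ t ^ 2) / (2 * Real.sqrt (w t))))
       + v * (phiD (-(x₁ v t)) * -a)) t := by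
    have h1 := hKt.mul ((hasDerivAt_Phi (x₂ v t)).comp t hx2t)
    have h2 := ((hasDerivAt_Phi (-(x₁ v t))).comp t hx1t.neg).const_mul v
    exact (h1.add h2).congr_of_eventuallyEq (Filter.Eventually.of_forall fun u => hF' v u)
  -- assemble
  rw [hF' v t, (hFv v hv).deriv, hFvv.deriv, hFt.deriv, phiD_neg]
  have hclean : (1 / 2) * (σ t) ^ 2 * v ^ 2 * (phiD (x₁ v t) * -(1 / (v * Real.sqrt (w t))))
      = -(1 / 2) * (σ t) ^ 2 * v * phiD (x₁ v t) * (1 / Real.sqrt (w t)) := by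
    field_simp
  rw [hclean]
  have hs2 : Real.sqrt (w t) * Real.sqrt (w t) = w t := Real.mul_self_sqrt hwt.le
  have hinv : (1:ℝ) / (2 * Real.sqrt (w t)) * Real.sqrt (w t) = 1 / 2 := by
    field_simp
  linear_combination (a - -(σ t ^ 2) / (2 * Real.sqrt (w t))) * hkey v hv
end

section
/- Let r be a real number, B > 0, T > 0, and σ : ℝ → ℝ continuous with σ(s)² ≥ m for some m > 0 and all s ∈ [0,T]. Define w(t) = ∫_t^T σ(s)² ds, x₁(v,t) = (log(v/B) + r(T−t) + w(t)/2)/√(w(t)), x₂(v,t) = x₁(v,t) − √(w(t)), and G(v,t) = B e^{−r(T−t)} Φ(−x₂(v,t)) − v Φ(−x₁(v,t)). Then for every v > 0, G(v,t) → max(B − v, 0) as t → T from the left. -/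
open Real Set Filter MeasureTheory

lemma gauss_fun_eq :
    (fun y : ℝ => Real.exp (-(y ^ 2) / 2)) = fun y : ℝ => Real.exp (-(1/2 : ℝ) * y ^ 2) := by
  funext y; ring_nf

lemma integrable_gauss : Integrable (fun y : ℝ => Real.exp (-(y ^ 2) / 2)) := by
  rw [gauss_fun_eq]; exact integrable_exp_neg_mul_sq (by norm_num)

lemma integral_gauss_total : (∫ y : ℝ, Real.exp (-(y ^ 2) / 2)) = Real.sqrt (2 * Real.pi) := by
  rw [gauss_fun_eq, integral_gaussian]
  congr 1
  ring

lemma sqrt_two_pi_pos : (0:ℝ) < Real.sqrt (2 * Real.pi) :=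
  Real.sqrt_pos.mpr (by positivity)

lemma Phi_tendsto_atTop : Tendsto Phi atTop (nhds 1) := by
  have hcov : AECover (volume : Measure ℝ) atTop (fun x : ℝ => Iic x) :=
    aecover_Iic tendsto_id
  have h := hcov.integral_tendsto_of_countably_generated integrable_gauss
  rw [integral_gauss_total] at h
  have h2 := h.const_mul (Real.sqrt (2 * Real.pi))⁻¹
  rw [inv_mul_cancel₀ sqrt_two_pi_pos.ne'] at h2
  exact h2

lemma Phi_tendsto_atBot : Tendsto Phi atBot (nhds 0) := by
  have hcov : AECover (volume : Measure ℝ) atBot (fun x : ℝ => Ioi x) :=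
    aecover_Ioi tendsto_id
  have h := hcov.integral_tendsto_of_countably_generated integrable_gauss
  rw [integral_gauss_total] at h
  have heq : ∀ x : ℝ, Phi x = (Real.sqrt (2 * Real.pi))⁻¹ *
      (Real.sqrt (2 * Real.pi) - ∫ y in Ioi x, Real.exp (-(y ^ 2) / 2)) := by
    intro x
    rw [Phi, ← integral_gauss_total, ← intervalIntegral.integral_Iic_add_Ioi
      integrable_gauss.integrableOn integrable_gauss.integrableOn]
    ring
  have h2 : Tendsto (fun x : ℝ => (Real.sqrt (2 * Real.pi))⁻¹ *
      (Real.sqrt (2 * Real.pi) - ∫ y in Ioi x, Real.exp (-(y ^ 2) / 2))) atBot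
      (nhds ((Real.sqrt (2 * Real.pi))⁻¹ *
        (Real.sqrt (2 * Real.pi) - Real.sqrt (2 * Real.pi)))) :=
    (tendsto_const_nhds.sub h).const_mul _
  rw [sub_self, mul_zero] at h2
  exact h2.congr fun x => (heq x).symm

lemma Phi_continuous : Continuous Phi := by
  have heq : ∀ x : ℝ, (Real.sqrt (2 * Real.pi))⁻¹ *
      ((∫ y in Iic (0:ℝ), Real.exp (-(y ^ 2) / 2)) +
        ∫ y in (0:ℝ)..x, Real.exp (-(y ^ 2) / 2)) = Phi x := by
    intro x
    rw [Phi, ← intervalIntegral.integral_Iic_sub_Iic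
      integrable_gauss.integrableOn integrable_gauss.integrableOn]
    ring
  have hc : Continuous fun x : ℝ => (Real.sqrt (2 * Real.pi))⁻¹ *
      ((∫ y in Iic (0:ℝ), Real.exp (-(y ^ 2) / 2)) +
        ∫ y in (0:ℝ)..x, Real.exp (-(y ^ 2) / 2)) :=
    continuous_const.mul (continuous_const.add (integrable_gauss.continuous_primitive 0))
  exact hc.congr heq

lemma Phi_zero : Phi 0 = 1 / 2 := by
  have h1 : (∫ y in Iic (0:ℝ), Real.exp (-(y ^ 2) / 2)) +
      (∫ y in Ioi (0:ℝ), Real.exp (-(y ^ 2) / 2)) = Real.sqrt (2 * Real.pi) := by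
    rw [intervalIntegral.integral_Iic_add_Ioi
      integrable_gauss.integrableOn integrable_gauss.integrableOn, integral_gauss_total]
  have h2 : (∫ y in Ioi (0:ℝ), Real.exp (-(y ^ 2) / 2)) = Real.sqrt (2 * Real.pi) / 2 := by
    rw [gauss_fun_eq, integral_gaussian_Ioi]
    congr 2
    ring
  have h3 : (∫ y in Iic (0:ℝ), Real.exp (-(y ^ 2) / 2)) = Real.sqrt (2 * Real.pi) / 2 := by
    linarith
  rw [Phi, h3]
  field_simp

/-- final condition of the loan guarantee:
`G(v,t) → max (B - v) 0` as `t → T⁻`. -/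
theorem guarantee_final_condition
    (r B T m : ℝ) (hB : 0 < B) (hT : 0 < T) (hm : 0 < m)
    (σ : ℝ → ℝ) (hσ : Continuous σ)
    (hσm : ∀ s ∈ Set.Icc (0 : ℝ) T, m ≤ (σ s) ^ 2)
    (w : ℝ → ℝ) (hw : ∀ t, w t = ∫ s in t..T, (σ s) ^ 2)
    (x₁ x₂ : ℝ → ℝ → ℝ)
    (hx₁ : ∀ v t, x₁ v t =
      (Real.log (v / B) + r * (T - t) + w t / 2) / Real.sqrt (w t))
    (hx₂ : ∀ v t, x₂ v t = x₁ v t - Real.sqrt (w t))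
    (G : ℝ → ℝ → ℝ)
    (hG : ∀ v t, G v t =
      B * Real.exp (-r * (T - t)) * Phi (-(x₂ v t)) - v * Phi (-(x₁ v t))) :
    ∀ v > (0 : ℝ),
      Filter.Tendsto (fun t => G v t) (nhdsWithin T (Set.Iio T))
        (nhds (max (B - v) 0)) := by
  intro v hv
  set l : Filter ℝ := nhdsWithin T (Set.Iio T) with hl
  have hσ2 : Continuous fun s => (σ s) ^ 2 := hσ.pow 2
  -- basic facts about w
  have hwc : Continuous w := by
    have h1 : Continuous fun t => ∫ s in T..t, (σ s) ^ 2 :=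
      intervalIntegral.continuous_primitive (fun a b => hσ2.intervalIntegrable a b) T
    have h2 : w = fun t => -(∫ s in T..t, (σ s) ^ 2) := by
      funext t; rw [hw t, intervalIntegral.integral_symm]
    rw [h2]; exact h1.neg
  have hwT : w T = 0 := by rw [hw T, intervalIntegral.integral_same]
  have hIoo : Ioo (0:ℝ) T ∈ l := Ioo_mem_nhdsLT_of_mem ⟨hT, le_refl T⟩
  have hwlb : ∀ t ∈ Ioo (0:ℝ) T, m * (T - t) ≤ w t := by
    intro t ht
    rw [hw t]
    have hmono : ∫ s in t..T, m ≤ ∫ s in t..T, (σ s) ^ 2 := by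
      apply intervalIntegral.integral_mono_on ht.2.le
        intervalIntegrable_const (hσ2.intervalIntegrable t T)
      intro s hs
      exact hσm s ⟨le_trans ht.1.le hs.1, hs.2⟩
    rw [intervalIntegral.integral_const, smul_eq_mul] at hmono
    linarith [hmono]
  have hwpos : ∀ t ∈ Ioo (0:ℝ) T, 0 < w t := by
    intro t ht
    have h : 0 < m * (T - t) := by
      have := ht.2; nlinarith
    linarith [hwlb t ht]
  have hw0 : Tendsto w l (nhds 0) := by
    have := (hwc.tendsto T).mono_left (nhdsWithin_le_nhds (s := Set.Iio T))
    rwa [hwT] at this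
  -- u = sqrt ∘ w
  have hu0 : Tendsto (fun t => Real.sqrt (w t)) l (nhds 0) := by
    have := (Real.continuous_sqrt.tendsto 0).comp hw0
    simpa [Function.comp_def] using this
  have hupos : ∀ t ∈ Ioo (0:ℝ) T, 0 < Real.sqrt (w t) := fun t ht =>
    Real.sqrt_pos.mpr (hwpos t ht)
  -- limit of exp factor
  have hexp : Tendsto (fun t => Real.exp (-r * (T - t))) l (nhds 1) := by
    have h1 : Tendsto (fun t : ℝ => -r * (T - t)) l (nhds 0) := by
      have h2 : Tendsto (fun t : ℝ => -r * (T - t)) (nhds T) (nhds (-r * (T - T))) :=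
        (tendsto_const_nhds.mul (tendsto_const_nhds.sub tendsto_id))
      simpa using h2.mono_left (nhdsWithin_le_nhds (s := Set.Iio T))
    simpa [Function.comp_def] using (Real.continuous_exp.tendsto 0).comp h1
  have hTt0 : Tendsto (fun t : ℝ => T - t) l (nhds 0) := by
    have h2 : Tendsto (fun t : ℝ => T - t) (nhds T) (nhds (T - T)) :=
      tendsto_const_nhds.sub tendsto_id
    simpa using h2.mono_left (nhdsWithin_le_nhds (s := Set.Iio T))
  -- limit of the numerator of x₁
  have hnum : Tendsto (fun t => Real.log (v / B) + r * (T - t) + w t / 2) l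
      (nhds (Real.log (v / B))) := by
    have h1 : Tendsto (fun t : ℝ => r * (T - t)) l (nhds 0) :=
      by simpa using hTt0.const_mul r
    have h2 :=
      ((tendsto_const_nhds (x := Real.log (v / B)) (f := l)).add h1).add
        (hw0.div_const 2)
    simpa using h2
  rcases lt_trichotomy v B with hvB | hvB | hvB
  · -- case v < B : x₁ → -∞
    have hL : Real.log (v / B) < 0 := Real.log_neg (div_pos hv hB) ((div_lt_one hB).mpr hvB)
    have huin : Tendsto (fun t => Real.sqrt (w t)) l (nhdsWithin 0 (Ioi 0)) := by
      apply tendsto_nhdsWithin_of_tendsto_nhds_of_eventually_within _ hu0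
      filter_upwards [hIoo] with t ht using hupos t ht
    have hinv : Tendsto (fun t => (Real.sqrt (w t))⁻¹) l atTop :=
      tendsto_inv_nhdsGT_zero.comp huin
    have hx1 : Tendsto (fun t => x₁ v t) l atBot := by
      have h := hnum.neg_mul_atTop hL hinv
      apply h.congr
      intro t
      rw [hx₁ v t]
      exact (div_eq_mul_inv _ _).symm
    have hx2 : Tendsto (fun t => x₂ v t) l atBot := by
      have h := hx1.atBot_add (hu0.neg)
      apply h.congr
      intro t
      rw [hx₂ v t, sub_eq_add_neg]
    have hphi1 : Tendsto (fun t => Phi (-(x₁ v t))) l (nhds 1) :=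
      Phi_tendsto_atTop.comp (tendsto_neg_atBot_atTop.comp hx1)
    have hphi2 : Tendsto (fun t => Phi (-(x₂ v t))) l (nhds 1) :=
      Phi_tendsto_atTop.comp (tendsto_neg_atBot_atTop.comp hx2)
    have hGl : Tendsto (fun t => G v t) l (nhds (B * 1 * 1 - v * 1)) := by
      have h := (((tendsto_const_nhds (x := B) (f := l)).mul hexp).mul hphi2).sub
        ((tendsto_const_nhds (x := v) (f := l)).mul hphi1)
      apply h.congr
      intro t; rw [hG v t]
    have hmax : max (B - v) 0 = B * 1 * 1 - v * 1 := by
      rw [max_eq_left (by linarith)]; ring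
    rwa [hmax]
  · -- case v = B : x₁ → 0
    subst hvB
    have hL : Real.log (v / v) = 0 := by rw [div_self hv.ne', Real.log_one]
    have hx1 : Tendsto (fun t => x₁ v t) l (nhds 0) := by
      apply squeeze_zero_norm'
        (a := fun t => |r| / Real.sqrt m * Real.sqrt (T - t) + Real.sqrt (w t) / 2)
      · filter_upwards [hIoo] with t ht
        have hTt : 0 < T - t := by linarith [ht.2]
        have hwt : 0 < w t := hwpos t ht
        have hut : 0 < Real.sqrt (w t) := hupos t ht
        have hlb : Real.sqrt m * Real.sqrt (T - t) ≤ Real.sqrt (w t) := by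
          rw [← Real.sqrt_mul hm.le]
          exact Real.sqrt_le_sqrt (hwlb t ht)
        have hlbpos : 0 < Real.sqrt m * Real.sqrt (T - t) := by positivity
        rw [hx₁ v t, hL, zero_add, Real.norm_eq_abs, abs_div, abs_of_pos hut]
        have habs : |r * (T - t) + w t / 2| ≤ |r| * (T - t) + w t / 2 := by
          calc |r * (T - t) + w t / 2| ≤ |r * (T - t)| + |w t / 2| := abs_add_le _ _
            _ = |r| * (T - t) + w t / 2 := by
                rw [abs_mul, abs_of_pos hTt, abs_of_pos (by linarith : (0:ℝ) < w t / 2)]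
        have hstep1 : |r * (T - t) + w t / 2| / Real.sqrt (w t)
            ≤ (|r| * (T - t) + w t / 2) / Real.sqrt (w t) := by gcongr
        have hstep2 : (|r| * (T - t) + w t / 2) / Real.sqrt (w t)
            ≤ |r| / Real.sqrt m * Real.sqrt (T - t) + Real.sqrt (w t) / 2 := by
          rw [add_div]
          apply add_le_add
          · calc |r| * (T - t) / Real.sqrt (w t)
                ≤ |r| * (T - t) / (Real.sqrt m * Real.sqrt (T - t)) := by
                  gcongr
              _ = |r| / Real.sqrt m * Real.sqrt (T - t) := by
                  have hsm : Real.sqrt m ≠ 0 := (Real.sqrt_pos.mpr hm).ne'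
                  have hst : Real.sqrt (T - t) ≠ 0 := (Real.sqrt_pos.mpr hTt).ne'
                  field_simp
                  linear_combination (-|r|) * Real.sq_sqrt hTt.le
          · have heq : w t / 2 / Real.sqrt (w t) = Real.sqrt (w t) / 2 := by
              rw [div_div, mul_comm, ← div_div, Real.div_sqrt]
            rw [heq]
        exact le_trans hstep1 hstep2
      · have hs : Tendsto (fun t => Real.sqrt (T - t)) l (nhds 0) := by
          simpa [Function.comp_def] using (Real.continuous_sqrt.tendsto 0).comp hTt0
        have h := (hs.const_mul (|r| / Real.sqrt m)).add (hu0.div_const 2)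
        simpa using h
    have hx2 : Tendsto (fun t => x₂ v t) l (nhds 0) := by
      have h := hx1.sub hu0
      rw [sub_zero] at h
      apply h.congr
      intro t; rw [hx₂ v t]
    have hx1n : Tendsto (fun t => -(x₁ v t)) l (nhds 0) := by simpa using hx1.neg
    have hx2n : Tendsto (fun t => -(x₂ v t)) l (nhds 0) := by simpa using hx2.neg
    have hphi1 : Tendsto (fun t => Phi (-(x₁ v t))) l (nhds (1/2)) := by
      have h := (Phi_continuous.tendsto 0).comp hx1n
      simpa [Phi_zero, Function.comp_def] using h
    have hphi2 : Tendsto (fun t => Phi (-(x₂ v t))) l (nhds (1/2)) := by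
      have h := (Phi_continuous.tendsto 0).comp hx2n
      simpa [Phi_zero, Function.comp_def] using h
    have hGl : Tendsto (fun t => G v t) l (nhds (v * 1 * (1/2) - v * (1/2))) := by
      have h := (((tendsto_const_nhds (x := v) (f := l)).mul hexp).mul hphi2).sub
        ((tendsto_const_nhds (x := v) (f := l)).mul hphi1)
      apply h.congr
      intro t; rw [hG v t]
    have hmax : max (v - v) 0 = v * 1 * (1/2) - v * (1/2) := by
      rw [sub_self, max_self]; ring
    rwa [hmax]
  · -- case B < v : x₁ → +∞
    have hL : 0 < Real.log (v / B) := Real.log_pos ((one_lt_div hB).mpr hvB)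
    have huin : Tendsto (fun t => Real.sqrt (w t)) l (nhdsWithin 0 (Ioi 0)) := by
      apply tendsto_nhdsWithin_of_tendsto_nhds_of_eventually_within _ hu0
      filter_upwards [hIoo] with t ht using hupos t ht
    have hinv : Tendsto (fun t => (Real.sqrt (w t))⁻¹) l atTop :=
      tendsto_inv_nhdsGT_zero.comp huin
    have hx1 : Tendsto (fun t => x₁ v t) l atTop := by
      have h := hnum.pos_mul_atTop hL hinv
      apply h.congr
      intro t
      rw [hx₁ v t]
      exact (div_eq_mul_inv _ _).symm
    have hx2 : Tendsto (fun t => x₂ v t) l atTop := by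
      have h := hx1.atTop_add (hu0.neg)
      apply h.congr
      intro t
      rw [hx₂ v t, sub_eq_add_neg]
    have hphi1 : Tendsto (fun t => Phi (-(x₁ v t))) l (nhds 0) :=
      Phi_tendsto_atBot.comp (tendsto_neg_atTop_atBot.comp hx1)
    have hphi2 : Tendsto (fun t => Phi (-(x₂ v t))) l (nhds 0) :=
      Phi_tendsto_atBot.comp (tendsto_neg_atTop_atBot.comp hx2)
    have hGl : Tendsto (fun t => G v t) l (nhds (B * 1 * 0 - v * 0)) := by
      have h := (((tendsto_const_nhds (x := B) (f := l)).mul hexp).mul hphi2).sub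
        ((tendsto_const_nhds (x := v) (f := l)).mul hphi1)
      apply h.congr
      intro t; rw [hG v t]
    have hmax : max (B - v) 0 = B * 1 * 0 - v * 0 := by
      rw [max_eq_right (by linarith)]; ring
    rwa [hmax]
end
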